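/- Let p be a prime, G a finite group, S a Sylow p-subgroup of G, and Q ≤ S a large p-subgroup of G, i.e. C_G(Q) ≤ Q and N_G(U) ≤ N_G(Q) for every nontrivial subgroup U of C_G(Q). Let L be a subgroup of G with S ≤ L and L not contained in N_G(Q), and let Y be a normal elementary abelian p-subgroup of L. Then C_Y(L°) = 1, where L° = ⟨Q^L⟩ is the normal closure of Q in L. -/

import Mathlib

/-! `Z = Y ∩ C(L°)` is normalized by `L`, because `L` normalizes both `Y` and `L° = ⟨Q^L⟩`, and
`Z` centralizes `Q ≤ L°`. If `Z` were nontrivial, largeness of `Q` would give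
`L ≤ N(Z) ≤ N(Q)`. -/

/-- A `p`-subgroup `Q` of a group is *large* if `C_G(Q) ≤ Q` and `N_G(U) ≤ N_G(Q)` for
every nontrivial subgroup `U` of `C_G(Q)`. -/
def IsLargeSubgroup (p : ℕ) {G : Type*} [Group G] (Q : Subgroup G) : Prop :=
  IsPGroup p Q ∧ Subgroup.centralizer (Q : Set G) ≤ Q ∧
    ∀ U : Subgroup G, U ≠ ⊥ → U ≤ Subgroup.centralizer (Q : Set G) →
      Subgroup.normalizer (U : Set G) ≤ Subgroup.normalizer (Q : Set G)

/-- `conjClosure A H = ⟨A^H⟩`, the subgroup generated by all `H`-conjugates of `A`. -/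
def conjClosure {G : Type*} [Group G] (A H : Subgroup G) : Subgroup G :=
  Subgroup.closure {x : G | ∃ h ∈ H, ∃ a ∈ A, x = h * a * h⁻¹}

section

open Subgroup

variable {G : Type*} [Group G]

theorem le_conjClosure (A H : Subgroup G) : A ≤ conjClosure A H :=
  fun a ha => subset_closure ⟨1, one_mem H, a, ha, by group⟩

theorem le_normalizer_conjClosure (A H : Subgroup G) :
    H ≤ normalizer (conjClosure A H : Set G) :=
  le_normalizer_closure_iff.mpr fun h hh _ ⟨k, hk, a, ha, hx⟩ =>
    subset_closure ⟨h * k, mul_mem hh hk, a, ha, by rw [hx]; group⟩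

theorem Subgroup.normalizer_le_normalizer_centralizer (K : Subgroup G) :
    normalizer (K : Set G) ≤ normalizer (centralizer (K : Set G) : Set G) := by
  refine le_normalizer_iff.mpr fun g hg c hc => mem_centralizer_iff.mpr fun k hk => ?_
  have hk' : g⁻¹ * k * g ∈ K := (mem_normalizer_iff''.mp hg k).mp hk
  have hck : (g⁻¹ * k * g) * c = c * (g⁻¹ * k * g) := mem_centralizer_iff.mp hc _ hk'
  calc k * (g * c * g⁻¹) = g * ((g⁻¹ * k * g) * c) * g⁻¹ := by group
    _ = g * (c * (g⁻¹ * k * g)) * g⁻¹ := by rw [hck]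
    _ = g * c * g⁻¹ * k := by group

theorem IsLargeSubgroup.eq_bot_of_le_centralizer {p : ℕ} {Q U L : Subgroup G}
    (hQ : IsLargeSubgroup p Q) (hUQ : U ≤ centralizer (Q : Set G))
    (hLU : L ≤ normalizer (U : Set G)) (hLQ : ¬ L ≤ normalizer (Q : Set G)) : U = ⊥ := by
  by_contra hU
  exact hLQ (hLU.trans (hQ.2.2 U hU hUQ))

theorem IsLargeSubgroup.inf_centralizer_conjClosure_eq_bot {p : ℕ} {Q L Y : Subgroup G}
    (hQ : IsLargeSubgroup p Q) (hLQ : ¬ L ≤ normalizer (Q : Set G))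
    (hLY : L ≤ normalizer (Y : Set G)) :
    Y ⊓ centralizer (conjClosure Q L : Set G) = ⊥ := by
  refine hQ.eq_bot_of_le_centralizer ?_ ?_ hLQ
  · exact inf_le_right.trans (centralizer_le (le_conjClosure Q L))
  · exact (le_inf hLY ((le_normalizer_conjClosure Q L).trans
      (normalizer_le_normalizer_centralizer _))).trans inf_normalizer_le_normalizer_inf

end

theorem stmt9_general {p : ℕ} {G : Type*} [Group G]
    (Q : Subgroup G) (hQ : IsLargeSubgroup p Q)
    (L : Subgroup G) (hLnN : ¬ L ≤ Subgroup.normalizer (Q : Set G))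
    (Y : Subgroup G)
    (hYnormL : ∀ l ∈ L, ∀ y ∈ Y, l * y * l⁻¹ ∈ Y) :
    Y ⊓ Subgroup.centralizer ((conjClosure Q L : Subgroup G) : Set G) = ⊥ :=
  hQ.inf_centralizer_conjClosure_eq_bot hLnN (Subgroup.le_normalizer_iff.mpr hYnormL)

/-- Let `G` be a finite group, `S` a Sylow `p`-subgroup, `Q ≤ S` a large
`p`-subgroup of `G`, and `L ≥ S` a subgroup not contained in `N_G(Q)`.  If `Y` is a normal
elementary abelian `p`-subgroup of `L`, then `C_Y(L°) = 1`, where `L° = ⟨Q^L⟩`. -/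
theorem stmt9 {p : ℕ} (hp : p.Prime) {G : Type*} [Group G] [Finite G]
    (S : Sylow p G) (Q : Subgroup G) (hQS : Q ≤ S) (hQ : IsLargeSubgroup p Q)
    (L : Subgroup G) (hSL : (S : Subgroup G) ≤ L) (hLnN : ¬ L ≤ Subgroup.normalizer (Q : Set G))
    (Y : Subgroup G) (hYL : Y ≤ L)
    (hYnormL : ∀ l ∈ L, ∀ y ∈ Y, l * y * l⁻¹ ∈ Y)
    (hYp : IsPGroup p Y)
    (hYexp : ∀ y ∈ Y, y ^ p = 1) (hYab : ∀ y ∈ Y, ∀ z ∈ Y, y * z = z * y) :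
    Y ⊓ Subgroup.centralizer ((conjClosure Q L : Subgroup G) : Set G) = ⊥ :=
  stmt9_general Q hQ L hLnN Y hYnormL
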